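/- Linear-algebra model of Lemma 5.3 (fibprodflip): let T_M, T_Γ, T_X be oriented finite-dimensional real vector spaces, F: T_M → T_X and G: T_Γ → T_X linear maps with G - F: T_M ⊕ T_Γ → T_X surjective (here (G-F)(v,w) = G(w) - F(v)), and let W = ker(G - F) with the orientation making 0 → W → T_M ⊕ T_Γ → T_X → 0 orientation-compatible. Suppose σ_M, σ_Γ, σ_X are orientation-defining linear automorphisms of T_M, T_Γ, T_X with signs s_M, s_Γ, s_X ∈ {±1}, satisfying F∘σ_M = σ_X∘F and G∘σ_Γ = σ_X∘G. Then the induced automorphism of W has sign s_M · s_Γ · s_X. -/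

import Mathlib

namespace Stmt6

/-- `oAB` is the product orientation of `oA` and `oB`. -/
def IsProdOrient {A B : Type*} [AddCommGroup A] [Module ℝ A]
    [AddCommGroup B] [Module ℝ B] (a b N : ℕ) (h : a + b = N)
    (oA : Orientation ℝ A (Fin a)) (oB : Orientation ℝ B (Fin b))
    (oAB : Orientation ℝ (A × B) (Fin N)) : Prop :=
  ∃ (bA : Module.Basis (Fin a) ℝ A) (bB : Module.Basis (Fin b) ℝ B),
    bA.orientation = oA ∧ bB.orientation = oB ∧
    ((bA.prod bB).reindex (finSumFinEquiv.trans (finCongr h))).orientation = oAB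

/-- The short exact sequence `0 → V' -f→ V -g→ V'' → 0` is
orientation-compatible with respect to the orientations `o', o, o''`. -/
def SeqCompat {V' V V'' : Type*} [AddCommGroup V'] [Module ℝ V']
    [AddCommGroup V] [Module ℝ V] [AddCommGroup V''] [Module ℝ V'']
    (m n N : ℕ) (h : m + n = N) (f : V' →ₗ[ℝ] V) (g : V →ₗ[ℝ] V'')
    (o' : Orientation ℝ V' (Fin m)) (o : Orientation ℝ V (Fin N))
    (o'' : Orientation ℝ V'' (Fin n)) : Prop :=
  ∃ (b' : Module.Basis (Fin m) ℝ V') (b'' : Module.Basis (Fin n) ℝ V'')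
    (s : V'' →ₗ[ℝ] V) (B : Module.Basis (Fin N) ℝ V),
    b'.orientation = o' ∧ b''.orientation = o'' ∧
    g.comp s = LinearMap.id ∧
    (∀ i : Fin (m + n),
      B (finCongr h i) = Fin.addCases (fun k => f (b' k)) (fun k => s (b'' k)) i) ∧
    B.orientation = o

/-- The automorphism `e` of an oriented vector space has sign `s ∈ {±1}`. -/
def HasSign {V : Type*} [AddCommGroup V] [Module ℝ V] {n : ℕ}
    (e : V ≃ₗ[ℝ] V) (o : Orientation ℝ V (Fin n)) (s : ℤ) : Prop :=
  (s = 1 ∧ Orientation.map (Fin n) e o = o) ∨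
  (s = -1 ∧ Orientation.map (Fin n) e o = -o)

end Stmt6

/-!
The sign of an automorphism of an oriented space is the sign of its determinant, whichever
orientation is chosen. The automorphism `σ_M × σ_Γ` of `T_M × T_Γ` preserves
`W = ker (G - F)`, where it restricts to `σ_W`, and induces `σ_X` on the quotient
`(T_M × T_Γ) / W ≃ T_X`; hence `det σ_M · det σ_Γ = det σ_W · det σ_X`.
-/

open Module

namespace Stmt6

theorem hasSign_iff_eq_sign_det {V : Type*} [AddCommGroup V] [Module ℝ V]
    [FiniteDimensional ℝ V] {n : ℕ} (hn : finrank ℝ V = n)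
    (e : V ≃ₗ[ℝ] V) (o : Orientation ℝ V (Fin n)) (s : ℤ) :
    HasSign e o s ↔ s = SignType.sign (LinearMap.det (e : V →ₗ[ℝ] V)) := by
  have hcard : Fintype.card (Fin n) = finrank ℝ V := by rw [Fintype.card_fin, hn]
  have hpos := o.map_eq_iff_det_pos e hcard
  have hneg := o.map_eq_neg_iff_det_neg e hcard
  rcases e.isUnit_det'.ne_zero.lt_or_gt with h | h
  · simp [HasSign, sign_neg h, hneg.2 h, (Module.Ray.ne_neg_self o).symm]
  · simp [HasSign, sign_pos h, hpos.2 h, Module.Ray.ne_neg_self o]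

end Stmt6

theorem LinearMap.det_eq_det_ker_mul_det_of_surjective {K V W : Type*} [Field K]
    [AddCommGroup V] [Module K V] [FiniteDimensional K V] [AddCommGroup W] [Module K W]
    (f : V →ₗ[K] V) (g : W →ₗ[K] W) (D : V →ₗ[K] W) (hD : Function.Surjective D)
    (hfg : D ∘ₗ f = g ∘ₗ D) (h : ker D →ₗ[K] ker D)
    (hfh : (ker D).subtype ∘ₗ h = f ∘ₗ (ker D).subtype) :
    f.det = h.det * g.det := by
  have hf : ker D ≤ (ker D).comap f := fun v hv => by
    simp [mem_ker.1 hv, ← LinearMap.comp_apply, hfg]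
  have hh : h = f.restrict hf := by
    ext v
    exact congr($hfh v)
  let e := D.quotKerEquivOfSurjective hD
  have hg : e.toLinearMap ∘ₗ (ker D).mapQ (ker D) f hf ∘ₗ e.symm.toLinearMap = g := by
    rw [← LinearMap.comp_assoc, LinearEquiv.comp_toLinearMap_symm_eq]
    ext v
    exact congr($hfg v)
  rw [f.det_eq_det_mul_det (ker D) hf, hh, ← hg, LinearMap.det_conj]

open Stmt6 in
theorem stmt_6_general {TM TΓ TX : Type*}
    [AddCommGroup TM] [Module ℝ TM] [AddCommGroup TΓ] [Module ℝ TΓ]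
    [AddCommGroup TX] [Module ℝ TX]
    (dM dΓ dX m : ℕ) (hm : m + dX = dM + dΓ)
    (hdM : Module.finrank ℝ TM = dM) (hdΓ : Module.finrank ℝ TΓ = dΓ)
    (hdX : Module.finrank ℝ TX = dX)
    (F : TM →ₗ[ℝ] TX) (G : TΓ →ₗ[ℝ] TX)
    (D : (TM × TΓ) →ₗ[ℝ] TX)
    (hD : D = G.comp (LinearMap.snd ℝ TM TΓ) - F.comp (LinearMap.fst ℝ TM TΓ))
    (hsurj : Function.Surjective D)
    (oM : Orientation ℝ TM (Fin dM)) (oΓ : Orientation ℝ TΓ (Fin dΓ))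
    (oX : Orientation ℝ TX (Fin dX))
    (oMΓ : Orientation ℝ (TM × TΓ) (Fin (dM + dΓ)))
    (oW : Orientation ℝ (LinearMap.ker D) (Fin m))
    (hW : SeqCompat m dX (dM + dΓ) hm (LinearMap.ker D).subtype D oW oMΓ oX)
    (σM : TM ≃ₗ[ℝ] TM) (σΓ : TΓ ≃ₗ[ℝ] TΓ) (σX : TX ≃ₗ[ℝ] TX)
    (sM sΓ sX : ℤ)
    (hsM : HasSign σM oM sM) (hsΓ : HasSign σΓ oΓ sΓ) (hsX : HasSign σX oX sX)
    (hFcomm : F.comp σM.toLinearMap = σX.toLinearMap.comp F)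
    (hGcomm : G.comp σΓ.toLinearMap = σX.toLinearMap.comp G)
    (σW : (LinearMap.ker D) ≃ₗ[ℝ] (LinearMap.ker D))
    (hσW : ∀ x : LinearMap.ker D,
      ((σW x : TM × TΓ)) = (σM (x : TM × TΓ).1, σΓ (x : TM × TΓ).2)) :
    HasSign σW oW (sM * sΓ * sX) := by
  obtain ⟨b', -, -, B, -, -, -, -, -⟩ := hW
  have : Module.Finite ℝ (TM × TΓ) := .of_basis B
  have : Module.Finite ℝ TM := .of_surjective (LinearMap.fst ℝ TM TΓ) LinearMap.fst_surjective
  have : Module.Finite ℝ TΓ := .of_surjective (LinearMap.snd ℝ TM TΓ) LinearMap.snd_surjective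
  have : Module.Finite ℝ TX := .of_surjective D hsurj
  have hdet : LinearMap.det (σM : TM →ₗ[ℝ] TM) * LinearMap.det (σΓ : TΓ →ₗ[ℝ] TΓ) =
      LinearMap.det (σW : LinearMap.ker D →ₗ[ℝ] LinearMap.ker D) *
        LinearMap.det (σX : TX →ₗ[ℝ] TX) := by
    rw [← LinearMap.det_prodMap]
    refine LinearMap.det_eq_det_ker_mul_det_of_surjective _ _ D hsurj ?_ _ ?_
    · ext v
      · simpa [hD] using congr($hFcomm v)
      · simpa [hD] using congr($hGcomm v)
    · ext x : 1
      exact hσW x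
  have hX : sX * sX = 1 := by rcases hsX with ⟨rfl, -⟩ | ⟨rfl, -⟩ <;> norm_num
  rw [hasSign_iff_eq_sign_det hdM] at hsM
  rw [hasSign_iff_eq_sign_det hdΓ] at hsΓ
  rw [hasSign_iff_eq_sign_det hdX] at hsX
  rw [hasSign_iff_eq_sign_det (by simpa using finrank_eq_card_basis b')]
  set sW : ℤ :=
    (SignType.sign (LinearMap.det (σW : LinearMap.ker D →ₗ[ℝ] LinearMap.ker D)) : ℤ)
  have hsign : sM * sΓ = sW * sX := by
    simpa only [sign_mul, SignType.coe_mul, ← hsM, ← hsΓ, ← hsX] using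
      congr(((SignType.sign $hdet : SignType) : ℤ))
  linear_combination sX * hsign + sW * hX

open Stmt6 in
/-- Linear-algebra model of Lemma 5.3: with `W = ker(G - F)` carrying the
fiber-product orientation, and orientation-defining automorphisms
`σ_M, σ_Γ, σ_X` of signs `s_M, s_Γ, s_X` intertwining `F` and `G`, the induced
automorphism of `W` has sign `s_M · s_Γ · s_X`. -/
theorem stmt_6 {TM TΓ TX : Type*}
    [AddCommGroup TM] [Module ℝ TM] [AddCommGroup TΓ] [Module ℝ TΓ]
    [AddCommGroup TX] [Module ℝ TX]
    (dM dΓ dX m : ℕ) (hm : m + dX = dM + dΓ)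
    (hdM : Module.finrank ℝ TM = dM) (hdΓ : Module.finrank ℝ TΓ = dΓ)
    (hdX : Module.finrank ℝ TX = dX)
    (F : TM →ₗ[ℝ] TX) (G : TΓ →ₗ[ℝ] TX)
    (D : (TM × TΓ) →ₗ[ℝ] TX)
    (hD : D = G.comp (LinearMap.snd ℝ TM TΓ) - F.comp (LinearMap.fst ℝ TM TΓ))
    (hsurj : Function.Surjective D)
    (oM : Orientation ℝ TM (Fin dM)) (oΓ : Orientation ℝ TΓ (Fin dΓ))
    (oX : Orientation ℝ TX (Fin dX))
    (oMΓ : Orientation ℝ (TM × TΓ) (Fin (dM + dΓ)))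
    (hMΓ : IsProdOrient dM dΓ (dM + dΓ) rfl oM oΓ oMΓ)
    (oW : Orientation ℝ (LinearMap.ker D) (Fin m))
    (hW : SeqCompat m dX (dM + dΓ) hm (LinearMap.ker D).subtype D oW oMΓ oX)
    (σM : TM ≃ₗ[ℝ] TM) (σΓ : TΓ ≃ₗ[ℝ] TΓ) (σX : TX ≃ₗ[ℝ] TX)
    (sM sΓ sX : ℤ)
    (hsM : HasSign σM oM sM) (hsΓ : HasSign σΓ oΓ sΓ) (hsX : HasSign σX oX sX)
    (hFcomm : F.comp σM.toLinearMap = σX.toLinearMap.comp F)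
    (hGcomm : G.comp σΓ.toLinearMap = σX.toLinearMap.comp G)
    (σW : (LinearMap.ker D) ≃ₗ[ℝ] (LinearMap.ker D))
    (hσW : ∀ x : LinearMap.ker D,
      ((σW x : TM × TΓ)) = (σM (x : TM × TΓ).1, σΓ (x : TM × TΓ).2)) :
    HasSign σW oW (sM * sΓ * sX) :=
  stmt_6_general dM dΓ dX m hm hdM hdΓ hdX F G D hD hsurj oM oΓ oX oMΓ oW hW σM σΓ σX sM sΓ sX hsM
    hsΓ hsX hFcomm hGcomm σW hσW
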